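/- arXiv:2308.06867 — 2 statements merged into one kernel-verified Lean document; each statement's English description precedes it below -/
import Mathlib

section
/- Let X, Y : ℝⁿ → ℝⁿ be locally Lipschitz vector fields and let X_η, Y_η denote their mollifications with a smooth compactly supported mollifier kernel φ_η. Then for every x ∈ ℝⁿ there exists a modulus ρ (nondecreasing, ρ(0+) = 0) such that |[X_η, Y_η](x) − ([X,Y])_η(x)| ≤ ρ(η), where [X,Y] is the a.e.-defined Lie bracket (X and Y being differentiable a.e. by Rademacher) and ([X,Y])_η its mollification. -/
open Set Filter Topology MeasureTheory Metric
open scoped NNReal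

variable {n : ℕ}

/-- A locally Lipschitz map on a finite-dimensional normed space satisfies a Lipschitz-type
norm inequality on every closed ball. -/
theorem locLip_norm_bound {E F : Type*} [NormedAddCommGroup E] [NormedSpace ℝ E]
    [FiniteDimensional ℝ E] [NormedAddCommGroup F] {f : E → F} (hf : LocallyLipschitz f)
    (x₀ : E) (r : ℝ) :
    ∃ L : ℝ, 0 ≤ L ∧ ∀ z ∈ closedBall x₀ r, ∀ w ∈ closedBall x₀ r,
      ‖f z - f w‖ ≤ L * ‖z - w‖ := by
  have hcont := hf.continuous
  choose K t ht hlip using hf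
  have hcomp : IsCompact (closedBall x₀ r) := isCompact_closedBall x₀ r
  have hcover : closedBall x₀ r ⊆ ⋃ z : E, interior (t z) := fun y _ =>
    mem_iUnion.2 ⟨y, mem_interior_iff_mem_nhds.2 (ht y)⟩
  obtain ⟨s, hs⟩ := hcomp.elim_finite_subcover (fun z => interior (t z))
    (fun z => isOpen_interior) hcover
  obtain ⟨δ, δpos, hδ⟩ := lebesgue_number_lemma_of_metric
    (c := fun i : s => interior (t i)) hcomp
    (fun z => isOpen_interior) (by
      intro y hy
      obtain ⟨z, hz, hyz⟩ := mem_iUnion₂.1 (hs hy)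
      exact mem_iUnion.2 ⟨⟨z, hz⟩, hyz⟩)
  obtain ⟨B₀, hB₀⟩ := hcomp.exists_bound_of_continuousOn hcont.continuousOn
  set B : ℝ := max B₀ 0 with hB
  have hBnn : 0 ≤ B := le_max_right _ _
  have hBle : ∀ z ∈ closedBall x₀ r, ‖f z‖ ≤ B := fun z hz =>
    (hB₀ z hz).trans (le_max_left _ _)
  refine ⟨max ((s.sup K : ℝ≥0) : ℝ) (2 * B / δ),
    le_trans (NNReal.coe_nonneg _) (le_max_left _ _), fun z hz w hw => ?_⟩
  rcases lt_or_ge (dist z w) δ with hlt | hge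
  · obtain ⟨i, hi⟩ := hδ z hz
    have hzw : w ∈ interior (t i) := hi (by simpa [mem_ball, dist_comm] using hlt)
    have hzz : z ∈ interior (t i) := hi (mem_ball_self δpos)
    have := (hlip i).dist_le_mul z (interior_subset hzz) w (interior_subset hzw)
    rw [dist_eq_norm] at this
    calc ‖f z - f w‖ ≤ (K i) * dist z w := this
      _ ≤ ((s.sup K : ℝ≥0) : ℝ) * ‖z - w‖ := by
          rw [dist_eq_norm]
          gcongr
          exact_mod_cast NNReal.coe_le_coe.2 (Finset.le_sup i.2)
      _ ≤ max ((s.sup K : ℝ≥0) : ℝ) (2 * B / δ) * ‖z - w‖ := by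
          gcongr; exact le_max_left _ _
  · have h1 : ‖f z - f w‖ ≤ 2 * B := by
      calc ‖f z - f w‖ ≤ ‖f z‖ + ‖f w‖ := norm_sub_le _ _
        _ ≤ B + B := add_le_add (hBle z hz) (hBle w hw)
        _ = 2 * B := by ring
    calc ‖f z - f w‖ ≤ 2 * B := h1
      _ = (2 * B / δ) * δ := by field_simp
      _ ≤ (2 * B / δ) * ‖z - w‖ := by
          rw [← dist_eq_norm]
          exact mul_le_mul_of_nonneg_left hge (by positivity)
      _ ≤ max ((s.sup K : ℝ≥0) : ℝ) (2 * B / δ) * ‖z - w‖ := by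
          gcongr; exact le_max_right _ _

/-- Locally Lipschitz maps of `ℝⁿ` are differentiable a.e. (Rademacher). -/
theorem locLip_ae_diff {f : (Fin n → ℝ) → (Fin n → ℝ)} (hf : LocallyLipschitz f) :
    ∀ᵐ z : Fin n → ℝ, DifferentiableAt ℝ f z := by
  have H : ∀ m : ℕ, ∀ᵐ z : Fin n → ℝ, z ∈ closedBall 0 (m : ℝ) →
      DifferentiableWithinAt ℝ f (closedBall 0 (m : ℝ)) z := by
    intro m
    obtain ⟨L, hL0, hL⟩ := locLip_norm_bound hf 0 (m : ℝ)
    have hlip : LipschitzOnWith L.toNNReal f (closedBall 0 (m : ℝ)) := by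
      apply LipschitzOnWith.of_dist_le'
      intro z hz w hw
      rw [dist_eq_norm, dist_eq_norm]
      exact hL z hz w hw
    exact hlip.ae_differentiableWithinAt_of_mem
  filter_upwards [ae_all_iff.2 H] with z hz
  obtain ⟨m, hm⟩ := exists_nat_gt ‖z‖
  have hmem : z ∈ closedBall 0 (m : ℝ) := by
    simpa [mem_closedBall, dist_zero_right] using hm.le
  have hnh : closedBall (0 : Fin n → ℝ) (m : ℝ) ∈ 𝓝 z :=
    mem_nhds_iff.2 ⟨ball 0 (m : ℝ), ball_subset_closedBall, isOpen_ball, by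
      simpa [mem_ball, dist_zero_right] using hm⟩
  exact (hz m hmem).differentiableAt hnh

/-- The (everywhere-defined, a.e.-meaningful) Lie bracket `[X,Y] = DY·X − DX·Y`. -/
noncomputable def lieBracket (X Y : (Fin n → ℝ) → (Fin n → ℝ)) :
    (Fin n → ℝ) → (Fin n → ℝ) :=
  fun x => fderiv ℝ Y x (X x) - fderiv ℝ X x (Y x)

/-- Mollification of a vector field with the kernel `φ_η(h) = η^{-n} φ(h/η)`. -/
noncomputable def moll (φ : (Fin n → ℝ) → ℝ) (η : ℝ)
    (Z : (Fin n → ℝ) → (Fin n → ℝ)) : (Fin n → ℝ) → (Fin n → ℝ) :=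
  fun x => ∫ h, ((η ^ n)⁻¹ * φ (η⁻¹ • h)) • Z (x - h)

set_option maxHeartbeats 1000000 in
theorem stmt_9 (X Y : (Fin n → ℝ) → (Fin n → ℝ))
    (hX : LocallyLipschitz X) (hY : LocallyLipschitz Y)
    (φ : (Fin n → ℝ) → ℝ) (hφsmooth : ContDiff ℝ (⊤ : ℕ∞) φ)
    (hφsupp : tsupport φ ⊆ Metric.closedBall 0 1)
    (hφnonneg : ∀ x, 0 ≤ φ x) (hφint : (∫ x, φ x) = 1) :
    ∀ x : Fin n → ℝ, ∃ ρ : ℝ → ℝ, Monotone ρ ∧ (∀ η, 0 ≤ ρ η) ∧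
      Tendsto ρ (𝓝[>] 0) (𝓝 0) ∧
      ∀ η ∈ Ioo (0:ℝ) 1,
        ‖lieBracket (moll φ η X) (moll φ η Y) x - moll φ η (lieBracket X Y) x‖
          ≤ ρ η := by
  intro x₀
  obtain ⟨LX, hLX0, hLX⟩ := locLip_norm_bound hX x₀ 2
  obtain ⟨LY, hLY0, hLY⟩ := locLip_norm_bound hY x₀ 2
  set C : ℝ := 4 * LX * LY with hC
  have hC0 : 0 ≤ C := by positivity
  refine ⟨fun η => C * min (max η 0) 1, ?_, ?_, ?_, ?_⟩
  · exact ((monotone_id.max monotone_const).min monotone_const).const_mul hC0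
  · intro η
    have : (0:ℝ) ≤ min (max η 0) 1 := le_min (le_max_right _ _) zero_le_one
    positivity
  · have hcont : Continuous fun η : ℝ => C * min (max η 0) 1 :=
      continuous_const.mul ((continuous_id.max continuous_const).min continuous_const)
    have h0 : Tendsto (fun η : ℝ => C * min (max η 0) 1) (𝓝[>] (0:ℝ))
        (𝓝 (C * min (max 0 0) 1)) := (hcont.tendsto 0).mono_left nhdsWithin_le_nhds
    simpa using h0
  · intro η hη
    obtain ⟨hη0, hη1⟩ := hη
    set φη : (Fin n → ℝ) → ℝ := fun h => ((η ^ n)⁻¹ * φ (η⁻¹ • h)) with hφη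
    have hφc : Continuous φ := hφsmooth.continuous
    have hφηc : Continuous φη := continuous_const.mul (hφc.comp (continuous_const_smul _))
    have hφηnn : ∀ h, 0 ≤ φη h := fun h => mul_nonneg (by positivity) (hφnonneg _)
    have hsupp : ∀ h, φη h ≠ 0 → ‖h‖ ≤ η := by
      intro h hh
      have hφne : φ (η⁻¹ • h) ≠ 0 := fun h0 => hh (by simp [hφη, h0])
      have h1 : η⁻¹ • h ∈ tsupport φ := subset_tsupport _ hφne
      have h2 := hφsupp h1
      rw [mem_closedBall, dist_zero_right, norm_smul, Real.norm_eq_abs,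
        abs_of_pos (inv_pos.2 hη0)] at h2
      calc ‖h‖ = η * (η⁻¹ * ‖h‖) := by field_simp
        _ ≤ η * 1 := by gcongr
        _ = η := mul_one η
    have hts : tsupport φη ⊆ closedBall 0 η := by
      apply closure_minimal _ isClosed_closedBall
      intro h hh
      rw [mem_closedBall, dist_zero_right]
      exact hsupp h hh
    have hcs : HasCompactSupport φη :=
      IsCompact.of_isClosed_subset (isCompact_closedBall 0 η) (isClosed_tsupport _) hts
    have hφηint : Integrable φη := hφηc.integrable_of_hasCompactSupport hcs
    have hint1 : (∫ h, φη h) = 1 := by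
      have h1 := Measure.integral_comp_inv_smul (volume : Measure (Fin n → ℝ)) φ η
      rw [Module.finrank_fin_fun] at h1
      rw [hφη]
      rw [MeasureTheory.integral_const_mul, h1, hφint, smul_eq_mul, mul_one,
        abs_of_pos (pow_pos hη0 n), inv_mul_cancel₀ (ne_of_gt (pow_pos hη0 n))]
    have hmem1 : ∀ h, φη h ≠ 0 → x₀ - h ∈ closedBall x₀ 1 := by
      intro h hh
      rw [mem_closedBall, dist_eq_norm]
      simpa using (hsupp h hh).trans hη1.le
    have hmem2 : ∀ h, φη h ≠ 0 → x₀ - h ∈ closedBall x₀ 2 := fun h hh =>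
      closedBall_subset_closedBall (by norm_num) (hmem1 h hh)
    have hx₀2 : x₀ ∈ closedBall x₀ 2 := mem_closedBall_self (by norm_num)
    have hZint : ∀ Z : (Fin n → ℝ) → (Fin n → ℝ), Continuous Z →
        Integrable (fun h => φη h • Z (x₀ - h)) := by
      intro Z hZ
      apply Continuous.integrable_of_hasCompactSupport
      · exact hφηc.smul (hZ.comp (continuous_const.sub continuous_id))
      · exact hcs.smul_right
    -- fderiv bounds
    have hfb : ∀ (Z : (Fin n → ℝ) → (Fin n → ℝ)) (LZ : ℝ), 0 ≤ LZ →
        (∀ z ∈ closedBall x₀ 2, ∀ w ∈ closedBall x₀ 2, ‖Z z - Z w‖ ≤ LZ * ‖z - w‖) →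
        ∀ z ∈ closedBall x₀ 1, ‖fderiv ℝ Z z‖ ≤ LZ := by
      intro Z LZ hLZ0 hLZ z hz
      have hzb : z ∈ ball x₀ 2 := lt_of_le_of_lt (mem_closedBall.1 hz) (by norm_num)
      have hnh : closedBall x₀ 2 ∈ 𝓝 z :=
        mem_nhds_iff.2 ⟨ball x₀ 2, ball_subset_closedBall, isOpen_ball, hzb⟩
      apply norm_fderiv_le_of_lip' ℝ hLZ0
      filter_upwards [hnh] with w hw
      exact hLZ w hw z (ball_subset_closedBall hzb)
    have hT : MeasurePreserving (fun h : Fin n → ℝ => x₀ - h) volume volume :=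
      Measure.measurePreserving_sub_left volume x₀
    -- key: derivative of mollification
    have key : ∀ (Z : (Fin n → ℝ) → (Fin n → ℝ)) (LZ : ℝ), 0 ≤ LZ →
        (∀ z ∈ closedBall x₀ 2, ∀ w ∈ closedBall x₀ 2, ‖Z z - Z w‖ ≤ LZ * ‖z - w‖) →
        LocallyLipschitz Z →
        Integrable (fun h => φη h • fderiv ℝ Z (x₀ - h)) ∧
        HasFDerivAt (moll φ η Z) (∫ h, φη h • fderiv ℝ Z (x₀ - h)) x₀ := by
      intro Z LZ hLZ0 hLZ hZll
      have hae : ∀ᵐ h : Fin n → ℝ, DifferentiableAt ℝ Z (x₀ - h) :=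
        hT.quasiMeasurePreserving.ae (locLip_ae_diff hZll)
      have main := hasFDerivAt_integral_of_dominated_loc_of_lip'
        (F := fun (x : Fin n → ℝ) (h : Fin n → ℝ) => φη h • Z (x - h))
        (F' := fun h => φη h • fderiv ℝ Z (x₀ - h))
        (x₀ := x₀) (bound := fun h => ‖φη h‖ * LZ) (s := ball x₀ 1) (μ := volume) (ball_mem_nhds x₀ one_pos)
        ?_ ?_ ?_ ?_ ?_ ?_
      · exact ⟨main.1, main.2⟩
      · intro x _
        exact ((hφηc.smul ((hZll.continuous).comp
          (continuous_const.sub continuous_id))).aestronglyMeasurable)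
      · exact hZint Z hZll.continuous
      · apply Measurable.aestronglyMeasurable
        exact (hφηc.measurable.smul
          ((measurable_fderiv ℝ Z).comp (measurable_const.sub measurable_id)))
      · apply ae_of_all
        intro h x hx
        by_cases hh : φη h = 0
        · simp [hh]
        · have hη' : ‖h‖ ≤ η := hsupp h hh
          have h1 : x - h ∈ closedBall x₀ 2 := by
            rw [mem_closedBall, dist_eq_norm]
            calc ‖x - h - x₀‖ = ‖(x - x₀) + (-h)‖ := by ring_nf
              _ ≤ ‖x - x₀‖ + ‖h‖ := by simpa using norm_add_le (x - x₀) (-h)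
              _ ≤ 1 + 1 := by
                  refine add_le_add ?_ (hη'.trans hη1.le)
                  rw [← dist_eq_norm]; exact (mem_ball.1 hx).le
              _ = 2 := by norm_num
          have h2 : x₀ - h ∈ closedBall x₀ 2 := hmem2 h hh
          calc ‖φη h • Z (x - h) - φη h • Z (x₀ - h)‖
              = ‖φη h‖ * ‖Z (x - h) - Z (x₀ - h)‖ := by
                rw [← smul_sub, norm_smul]
            _ ≤ ‖φη h‖ * (LZ * ‖(x - h) - (x₀ - h)‖) :=
                mul_le_mul_of_nonneg_left (hLZ _ h1 _ h2) (norm_nonneg _)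
            _ = ‖φη h‖ * LZ * ‖x - x₀‖ := by
                rw [sub_sub_sub_cancel_right]; ring
      · exact hφηint.norm.mul_const LZ
      · filter_upwards [hae] with h hd
        have h1 : HasFDerivAt (fun x : Fin n → ℝ => x - h)
            (ContinuousLinearMap.id ℝ (Fin n → ℝ)) x₀ := (hasFDerivAt_id x₀).sub_const h
        have h2 : HasFDerivAt (fun x : Fin n → ℝ => Z (x - h))
            ((fderiv ℝ Z (x₀ - h)).comp (ContinuousLinearMap.id ℝ (Fin n → ℝ))) x₀ :=
          HasFDerivAt.comp x₀ hd.hasFDerivAt h1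
        rw [ContinuousLinearMap.comp_id] at h2
        exact h2.const_smul (φη h)
    obtain ⟨hXint', hXd⟩ := key X LX hLX0 hLX hX
    obtain ⟨hYint', hYd⟩ := key Y LY hLY0 hLY hY
    set vX := moll φ η X x₀ with hvX
    set vY := moll φ η Y x₀ with hvY
    -- closeness of mollification
    have hclose : ∀ (Z : (Fin n → ℝ) → (Fin n → ℝ)) (LZ : ℝ), 0 ≤ LZ →
        (∀ z ∈ closedBall x₀ 2, ∀ w ∈ closedBall x₀ 2, ‖Z z - Z w‖ ≤ LZ * ‖z - w‖) →
        Continuous Z → ‖moll φ η Z x₀ - Z x₀‖ ≤ LZ * η := by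
      intro Z LZ hLZ0 hLZ hZc
      have heq : moll φ η Z x₀ - Z x₀ = ∫ h, φη h • (Z (x₀ - h) - Z x₀) := by
        have e : (∫ h, φη h • (Z (x₀ - h) - Z x₀))
            = (∫ h, φη h • Z (x₀ - h)) - ∫ _h : Fin n → ℝ, φη _h • Z x₀ := by
          rw [← integral_sub (hZint Z hZc) (hφηint.smul_const (Z x₀))]
          congr 1; funext h; rw [smul_sub]
        rw [e, integral_smul_const, hint1, one_smul]
        rfl
      rw [heq]
      have hb : ∀ h, ‖φη h • (Z (x₀ - h) - Z x₀)‖ ≤ φη h * (LZ * η) := by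
        intro h
        by_cases hh : φη h = 0
        · simp [hh]
        · rw [norm_smul, Real.norm_eq_abs, abs_of_nonneg (hφηnn h)]
          refine mul_le_mul_of_nonneg_left ?_ (hφηnn h)
          calc ‖Z (x₀ - h) - Z x₀‖ ≤ LZ * ‖(x₀ - h) - x₀‖ := hLZ _ (hmem2 h hh) _ hx₀2
            _ = LZ * ‖h‖ := by rw [show x₀ - h - x₀ = -h by ring, norm_neg]
            _ ≤ LZ * η := by gcongr; exact hsupp h hh
      calc ‖∫ h, φη h • (Z (x₀ - h) - Z x₀)‖ ≤ ∫ h, φη h * (LZ * η) :=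
            norm_integral_le_of_norm_le (hφηint.mul_const _) (ae_of_all _ hb)
        _ = (∫ h, φη h) * (LZ * η) := by rw [integral_mul_const]
        _ = LZ * η := by rw [hint1, one_mul]
    have hcloseX : ‖vX - X x₀‖ ≤ LX * η := hclose X LX hLX0 hLX hX.continuous
    have hcloseY : ‖vY - Y x₀‖ ≤ LY * η := hclose Y LY hLY0 hLY hY.continuous
    -- integrabilities of applied maps
    have hIY : Integrable (fun h => φη h • (fderiv ℝ Y (x₀ - h)) vX) := by
      have h1 := hYint'.apply_continuousLinearMap vX
      simpa [ContinuousLinearMap.smul_apply] using h1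
    have hIX : Integrable (fun h => φη h • (fderiv ℝ X (x₀ - h)) vY) := by
      have h1 := hXint'.apply_continuousLinearMap vY
      simpa [ContinuousLinearMap.smul_apply] using h1
    -- integrability of the mollified bracket integrand
    obtain ⟨MX₀, hMX₀⟩ := (isCompact_closedBall x₀ 1).exists_bound_of_continuousOn
      hX.continuous.continuousOn
    obtain ⟨MY₀, hMY₀⟩ := (isCompact_closedBall x₀ 1).exists_bound_of_continuousOn
      hY.continuous.continuousOn
    set MX : ℝ := max MX₀ 0 with hMX
    set MY : ℝ := max MY₀ 0 with hMY
    have hMXle : ∀ z ∈ closedBall x₀ 1, ‖X z‖ ≤ MX := fun z hz =>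
      (hMX₀ z hz).trans (le_max_left _ _)
    have hMYle : ∀ z ∈ closedBall x₀ 1, ‖Y z‖ ≤ MY := fun z hz =>
      (hMY₀ z hz).trans (le_max_left _ _)
    have hIbr : Integrable (fun h => φη h • lieBracket X Y (x₀ - h)) := by
      have hmeas : Measurable (fun h => φη h • lieBracket X Y (x₀ - h)) := by
        have hsub : Measurable (fun h : Fin n → ℝ => x₀ - h) :=
          measurable_const.sub measurable_id
        have happly : ∀ (Z W : (Fin n → ℝ) → (Fin n → ℝ)), Continuous W →
            Measurable (fun h => fderiv ℝ Z (x₀ - h) (W (x₀ - h))) := by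
          intro Z W hW
          have h1 : Measurable (fun h => (fderiv ℝ Z (x₀ - h), W (x₀ - h))) :=
            ((measurable_fderiv ℝ Z).comp hsub).prodMk ((hW.measurable).comp hsub)
          exact (isBoundedBilinearMap_apply.continuous.measurable).comp h1
        exact hφηc.measurable.smul
          (((happly Y X hX.continuous).sub (happly X Y hY.continuous)))
      apply Integrable.mono' (g := fun h => ‖φη h‖ * (LY * MX + LX * MY))
        (hφηint.norm.mul_const _) hmeas.aestronglyMeasurable
      apply ae_of_all
      intro h
      by_cases hh : φη h = 0
      · simp [hh, lieBracket]
      · have h1 := hmem1 h hh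
        rw [norm_smul]
        gcongr
        calc ‖lieBracket X Y (x₀ - h)‖
            ≤ ‖fderiv ℝ Y (x₀ - h) (X (x₀ - h))‖ + ‖fderiv ℝ X (x₀ - h) (Y (x₀ - h))‖ :=
              norm_sub_le _ _
          _ ≤ ‖fderiv ℝ Y (x₀ - h)‖ * ‖X (x₀ - h)‖ + ‖fderiv ℝ X (x₀ - h)‖ * ‖Y (x₀ - h)‖ :=
              add_le_add (ContinuousLinearMap.le_opNorm _ _) (ContinuousLinearMap.le_opNorm _ _)
          _ ≤ LY * MX + LX * MY := by
              gcongr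
              · exact hfb Y LY hLY0 hLY _ h1
              · exact hMXle _ h1
              · exact hfb X LX hLX0 hLX _ h1
              · exact hMYle _ h1
    -- the commutator identity
    have hbr : lieBracket (moll φ η X) (moll φ η Y) x₀ - moll φ η (lieBracket X Y) x₀
        = ∫ h, φη h • (fderiv ℝ Y (x₀ - h) (vX - X (x₀ - h))
            - fderiv ℝ X (x₀ - h) (vY - Y (x₀ - h))) := by
      have e1 : lieBracket (moll φ η X) (moll φ η Y) x₀
          = (∫ h, φη h • fderiv ℝ Y (x₀ - h)) vX - (∫ h, φη h • fderiv ℝ X (x₀ - h)) vY := by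
        rw [lieBracket, hYd.fderiv, hXd.fderiv]
      have e2 : (∫ h, φη h • fderiv ℝ Y (x₀ - h)) vX
          = ∫ h, φη h • (fderiv ℝ Y (x₀ - h)) vX := by
        rw [ContinuousLinearMap.integral_apply hYint' vX]
        simp [ContinuousLinearMap.smul_apply]
      have e3 : (∫ h, φη h • fderiv ℝ X (x₀ - h)) vY
          = ∫ h, φη h • (fderiv ℝ X (x₀ - h)) vY := by
        rw [ContinuousLinearMap.integral_apply hXint' vY]
        simp [ContinuousLinearMap.smul_apply]
      have e4 : moll φ η (lieBracket X Y) x₀ = ∫ h, φη h • lieBracket X Y (x₀ - h) := rfl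
      have g1 : (fun h => φη h • (fderiv ℝ Y (x₀ - h) (vX - X (x₀ - h))
          - fderiv ℝ X (x₀ - h) (vY - Y (x₀ - h))))
          = fun h => (φη h • (fderiv ℝ Y (x₀ - h)) vX - φη h • (fderiv ℝ X (x₀ - h)) vY)
              - φη h • lieBracket X Y (x₀ - h) := by
        funext h; simp only [lieBracket, smul_sub, map_sub]; abel
      have hIYX : Integrable (fun h => φη h • (fderiv ℝ Y (x₀ - h)) vX
          - φη h • (fderiv ℝ X (x₀ - h)) vY) volume := hIY.sub hIX
      rw [e1, e2, e3, e4, g1, integral_sub hIYX hIbr, integral_sub hIY hIX]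
    rw [hbr]
    -- final estimate
    have hb2 : ∀ h, ‖φη h • (fderiv ℝ Y (x₀ - h) (vX - X (x₀ - h))
        - fderiv ℝ X (x₀ - h) (vY - Y (x₀ - h)))‖
        ≤ φη h * (LY * (2 * (LX * η)) + LX * (2 * (LY * η))) := by
      intro h
      by_cases hh : φη h = 0
      · simp [hh]
      · have h1 := hmem1 h hh
        have h2 := hmem2 h hh
        have hXz : ‖vX - X (x₀ - h)‖ ≤ 2 * (LX * η) := by
          calc ‖vX - X (x₀ - h)‖ ≤ ‖vX - X x₀‖ + ‖X x₀ - X (x₀ - h)‖ := by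
                simpa using norm_add_le (vX - X x₀) (X x₀ - X (x₀ - h))
            _ ≤ LX * η + LX * η := by
                refine add_le_add hcloseX ?_
                calc ‖X x₀ - X (x₀ - h)‖ ≤ LX * ‖x₀ - (x₀ - h)‖ := hLX _ hx₀2 _ h2
                  _ = LX * ‖h‖ := by rw [show x₀ - (x₀ - h) = h by ring]
                  _ ≤ LX * η := by gcongr; exact hsupp h hh
            _ = 2 * (LX * η) := by ring
        have hYz : ‖vY - Y (x₀ - h)‖ ≤ 2 * (LY * η) := by
          calc ‖vY - Y (x₀ - h)‖ ≤ ‖vY - Y x₀‖ + ‖Y x₀ - Y (x₀ - h)‖ := by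
                simpa using norm_add_le (vY - Y x₀) (Y x₀ - Y (x₀ - h))
            _ ≤ LY * η + LY * η := by
                refine add_le_add hcloseY ?_
                calc ‖Y x₀ - Y (x₀ - h)‖ ≤ LY * ‖x₀ - (x₀ - h)‖ := hLY _ hx₀2 _ h2
                  _ = LY * ‖h‖ := by rw [show x₀ - (x₀ - h) = h by ring]
                  _ ≤ LY * η := by gcongr; exact hsupp h hh
            _ = 2 * (LY * η) := by ring
        rw [norm_smul, Real.norm_eq_abs, abs_of_nonneg (hφηnn h)]
        refine mul_le_mul_of_nonneg_left ?_ (hφηnn h)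
        calc ‖fderiv ℝ Y (x₀ - h) (vX - X (x₀ - h))
              - fderiv ℝ X (x₀ - h) (vY - Y (x₀ - h))‖
            ≤ ‖fderiv ℝ Y (x₀ - h) (vX - X (x₀ - h))‖
              + ‖fderiv ℝ X (x₀ - h) (vY - Y (x₀ - h))‖ := norm_sub_le _ _
          _ ≤ ‖fderiv ℝ Y (x₀ - h)‖ * ‖vX - X (x₀ - h)‖
              + ‖fderiv ℝ X (x₀ - h)‖ * ‖vY - Y (x₀ - h)‖ :=
              add_le_add (ContinuousLinearMap.le_opNorm _ _)
                (ContinuousLinearMap.le_opNorm _ _)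
          _ ≤ LY * (2 * (LX * η)) + LX * (2 * (LY * η)) := by
              gcongr
              · exact hfb Y LY hLY0 hLY _ h1
              · exact hfb X LX hLX0 hLX _ h1
    calc ‖∫ h, φη h • (fderiv ℝ Y (x₀ - h) (vX - X (x₀ - h))
          - fderiv ℝ X (x₀ - h) (vY - Y (x₀ - h)))‖
        ≤ ∫ h, φη h * (LY * (2 * (LX * η)) + LX * (2 * (LY * η))) :=
          norm_integral_le_of_norm_le (hφηint.mul_const _) (ae_of_all _ hb2)
      _ = (∫ h, φη h) * (LY * (2 * (LX * η)) + LX * (2 * (LY * η))) := integral_mul_const _ _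
      _ = C * η := by rw [hint1, hC]; ring
      _ = C * min (max η 0) 1 := by
          rw [max_eq_left hη0.le, min_eq_left hη1.le]
end

section
/- Let X, Y be locally Lipschitz vector fields on ℝⁿ. For each x, the set-valued Lie bracket [X,Y]_set(x) := co{ v = lim_{x_k → x} [X,Y](x_k) : x_k ∈ Diff(X) ∩ Diff(Y) } is a nonempty, compact, convex subset of ℝⁿ, and it is antisymmetric: [Y,X]_set(x) = −[X,Y]_set(x). -/
/-!
The limit set in the definition of `[X,Y]_set(x)` is the set of cluster values of `[X,Y]` along
`𝓝[D] x`, where `D = Diff(X) ∩ Diff(Y)`. By Rademacher's theorem `D` is dense, so this filter is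
nontrivial; near `x` both fields are Lipschitz and bounded, so `DX`, `DY` and hence `[X,Y]` are
bounded there. Cluster values of a bounded function along a nontrivial filter form a nonempty
compact set, and by Carathéodory the convex hull of a compact subset of `ℝⁿ` is compact.
Antisymmetry follows from `[Y,X] = -[X,Y]` and `co (-S) = -co S`.
-/

open Set Filter Topology

variable {n : ℕ}

/-- The set-valued Lie bracket of two locally Lipschitz vector fields. -/
noncomputable def setLieBracket (X Y : (Fin n → ℝ) → (Fin n → ℝ)) (x : Fin n → ℝ) :
    Set (Fin n → ℝ) :=
  convexHull ℝ {v | ∃ u : ℕ → (Fin n → ℝ),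
    (∀ k, DifferentiableAt ℝ X (u k) ∧ DifferentiableAt ℝ Y (u k)) ∧
    Tendsto u atTop (𝓝 x) ∧
    Tendsto (fun k => lieBracket X Y (u k)) atTop (𝓝 v)}

open MeasureTheory

section ClusterValues

variable {α β : Type*} [TopologicalSpace β]

theorem setOf_exists_seq_tendsto_eq_setOf_mapClusterPt [TopologicalSpace α]
    [FirstCountableTopology α] [FirstCountableTopology β] (f : α → β) (s : Set α) (x : α) :
    {v | ∃ u : ℕ → α, (∀ k, u k ∈ s) ∧ Tendsto u atTop (𝓝 x) ∧
      Tendsto (fun k => f (u k)) atTop (𝓝 v)} = {v | MapClusterPt v (𝓝[s] x) f} := by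
  ext v
  constructor
  · rintro ⟨u, hus, hux, hfu⟩
    exact hfu.mapClusterPt.of_comp (tendsto_nhdsWithin_iff.2 ⟨hux, .of_forall hus⟩)
  · intro hv
    obtain ⟨θ, hθ, hfθ⟩ := exists_seq_comp_tendsto hv
    obtain ⟨hθx, hθs⟩ := tendsto_nhdsWithin_iff.1 hθ
    obtain ⟨N, hN⟩ := eventually_atTop.1 hθs
    exact ⟨fun k => θ (k + N), fun k => hN _ (Nat.le_add_left N k),
      (tendsto_add_atTop_iff_nat N).2 hθx, (tendsto_add_atTop_iff_nat N).2 hfθ⟩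

theorem setOf_mapClusterPt_neg [InvolutiveNeg β] [ContinuousNeg β] (F : Filter α) (f : α → β) :
    {v | MapClusterPt v F (-f)} = -{v | MapClusterPt v F f} := by
  ext v
  refine ⟨fun h => ?_, fun h => ?_⟩
  · simpa [Function.comp_def] using h.continuousAt_comp continuous_neg.continuousAt
  · have := (show MapClusterPt (-v) F f from h).continuousAt_comp continuous_neg.continuousAt
    rwa [neg_neg] at this

theorem isCompact_setOf_mapClusterPt [T2Space β] {K : Set β} (hK : IsCompact K) {F : Filter α}
    {f : α → β} (hf : ∀ᶠ a in F, f a ∈ K) : IsCompact {v | MapClusterPt v F f} :=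
  hK.of_isClosed_subset isClosed_setOfPred_clusterPt fun _ hv =>
    hK.isClosed.mem_of_mapClusterPt hv hf

end ClusterValues

section ConvexHull

variable {𝕜 E : Type*} [Field 𝕜] [LinearOrder 𝕜] [IsStrictOrderedRing 𝕜] [AddCommGroup E]
  [Module 𝕜 E] [FiniteDimensional 𝕜 E]

theorem convexHull_eq_image_stdSimplex_prod {s : Set E} (hs : s.Nonempty) :
    convexHull 𝕜 s =
      (fun q : (Fin (Module.finrank 𝕜 E + 1) → 𝕜) × (Fin (Module.finrank 𝕜 E + 1) → E) =>
        ∑ j, q.1 j • q.2 j) '' (stdSimplex 𝕜 _ ×ˢ univ.pi fun _ => s) := by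
  classical
  refine Subset.antisymm (fun v hv => ?_) ?_
  · obtain ⟨ι, _, z, w, hzs, hz, hw₀, hw₁, rfl⟩ := eq_pos_convex_span_of_mem_convexHull hv
    obtain ⟨e⟩ : Nonempty (ι ↪ Fin (Module.finrank 𝕜 E + 1)) :=
      Function.Embedding.nonempty_of_card_le <| by
        simpa using hz.card_le_finrank_succ.trans (Nat.succ_le_succ (Submodule.finrank_le _))
    obtain ⟨s₀, hs₀⟩ := hs
    have hw : w ∈ stdSimplex 𝕜 ι := ⟨fun i => (hw₀ i).le, hw₁⟩
    refine ⟨(stdSimplex.map e ⟨w, hw⟩, Function.extend e z fun _ => s₀),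
      ⟨(stdSimplex.map e _).2, fun j _ => ?_⟩, ?_⟩
    · show Function.extend e z (fun _ => s₀) j ∈ s
      by_cases h : ∃ i, e i = j
      · obtain ⟨i, rfl⟩ := h
        rw [e.injective.extend_apply]
        exact hzs ⟨i, rfl⟩
      · rw [Function.extend_apply' _ _ _ h]
        exact hs₀
    · simp only [stdSimplex.map_coe, FunOnFinite.linearMap_apply_apply, Finset.sum_smul]
      rw [← Finset.sum_fiberwise Finset.univ e (fun i => w i • z i)]
      refine Finset.sum_congr rfl fun j _ => Finset.sum_congr rfl fun i hi => ?_
      rw [← (Finset.mem_filter.1 hi).2, e.injective.extend_apply]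
      rfl
  · rintro _ ⟨⟨w, z⟩, ⟨hw, hz⟩, rfl⟩
    exact mem_convexHull_of_exists_fintype w z hw.1 hw.2 (fun j => hz j (mem_univ j)) rfl

end ConvexHull

theorem IsCompact.convexHull {E : Type*} [NormedAddCommGroup E] [NormedSpace ℝ E]
    [FiniteDimensional ℝ E] {s : Set E} (hs : IsCompact s) : IsCompact (convexHull ℝ s) := by
  rcases s.eq_empty_or_nonempty with rfl | hne
  · simp
  rw [convexHull_eq_image_stdSimplex_prod hne]
  refine ((isCompact_stdSimplex _ _).prod (isCompact_univ_pi fun _ => hs)).image ?_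
  fun_prop

section LocallyLipschitz

variable {E F : Type*} [NormedAddCommGroup E] [NormedAddCommGroup F] {f : E → F}

theorem LocallyLipschitz.ae_differentiableAt [NormedSpace ℝ E] [NormedSpace ℝ F]
    [FiniteDimensional ℝ E] [FiniteDimensional ℝ F]
    [MeasurableSpace E] [BorelSpace E] (μ : Measure E) [μ.IsAddHaarMeasure]
    (hf : LocallyLipschitz f) : ∀ᵐ x ∂μ, DifferentiableAt ℝ f x := by
  choose K t ht hL using hf
  obtain ⟨S, hS, hcover⟩ :=
    TopologicalSpace.countable_cover_nhds fun x => interior_mem_nhds.2 (ht x)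
  have hlocal : ∀ y, ∀ᵐ x ∂μ, x ∈ interior (t y) → DifferentiableAt ℝ f x := fun y => by
    filter_upwards [((hL y).mono interior_subset).ae_differentiableWithinAt_of_mem] with x hx hxt
    exact (hx hxt).differentiableAt (isOpen_interior.mem_nhds hxt)
  filter_upwards [(ae_ball_iff hS).2 fun y _ => hlocal y] with x hx
  obtain ⟨y, hyS, hxy⟩ := mem_iUnion₂.1 (hcover.symm ▸ mem_univ x)
  exact hx y hyS hxy

theorem LocallyLipschitz.exists_eventually_norm_fderiv_le [NormedSpace ℝ E] [NormedSpace ℝ F]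
    (hf : LocallyLipschitz f) (x : E) :
    ∃ K : ℝ, ∀ᶠ z in 𝓝 x, ‖fderiv ℝ f z‖ ≤ K := by
  obtain ⟨K, t, ht, hL⟩ := hf x
  exact ⟨K, (eventually_mem_nhds_iff.2 ht).mono fun z hz => norm_fderiv_le_of_lipschitzOn ℝ hz hL⟩

theorem LocallyLipschitz.exists_eventually_norm_le (hf : LocallyLipschitz f) (x : E) :
    ∃ C : ℝ, ∀ᶠ z in 𝓝 x, ‖f z‖ ≤ C :=
  ⟨‖f x‖ + 1, (hf.continuous.norm.continuousAt.eventually (gt_mem_nhds (lt_add_one _))).mono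
    fun _ => le_of_lt⟩

end LocallyLipschitz

section LieBracket

theorem lieBracket_swap (X Y : (Fin n → ℝ) → (Fin n → ℝ)) : lieBracket Y X = -lieBracket X Y := by
  funext z
  simp [lieBracket]

theorem exists_eventually_norm_lieBracket_le {X Y : (Fin n → ℝ) → (Fin n → ℝ)}
    (hX : LocallyLipschitz X) (hY : LocallyLipschitz Y) (x : Fin n → ℝ) :
    ∃ C : ℝ, ∀ᶠ z in 𝓝 x, ‖lieBracket X Y z‖ ≤ C := by
  obtain ⟨KX, hKX⟩ := hX.exists_eventually_norm_fderiv_le x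
  obtain ⟨KY, hKY⟩ := hY.exists_eventually_norm_fderiv_le x
  obtain ⟨CX, hCX⟩ := hX.exists_eventually_norm_le x
  obtain ⟨CY, hCY⟩ := hY.exists_eventually_norm_le x
  refine ⟨KY * CX + KX * CY, ?_⟩
  filter_upwards [hKX, hKY, hCX, hCY] with z hDX hDY hXz hYz
  calc ‖lieBracket X Y z‖ ≤ ‖fderiv ℝ Y z‖ * ‖X z‖ + ‖fderiv ℝ X z‖ * ‖Y z‖ :=
        (norm_sub_le _ _).trans (add_le_add ((fderiv ℝ Y z).le_opNorm _)
          ((fderiv ℝ X z).le_opNorm _))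
    _ ≤ KY * CX + KX * CY :=
        add_le_add (mul_le_mul hDY hXz (norm_nonneg _) ((norm_nonneg _).trans hDY))
          (mul_le_mul hDX hYz (norm_nonneg _) ((norm_nonneg _).trans hDX))

theorem setLieBracket_eq_convexHull_setOf_mapClusterPt (X Y : (Fin n → ℝ) → (Fin n → ℝ))
    (x : Fin n → ℝ) :
    setLieBracket X Y x = convexHull ℝ {v | MapClusterPt v
      (𝓝[{z | DifferentiableAt ℝ X z ∧ DifferentiableAt ℝ Y z}] x) (lieBracket X Y)} := by
  rw [setLieBracket, ← setOf_exists_seq_tendsto_eq_setOf_mapClusterPt]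
  rfl

theorem setLieBracket_swap (X Y : (Fin n → ℝ) → (Fin n → ℝ)) (x : Fin n → ℝ) :
    setLieBracket Y X x = -setLieBracket X Y x := by
  simp only [setLieBracket_eq_convexHull_setOf_mapClusterPt, lieBracket_swap X Y,
    setOf_mapClusterPt_neg, ← convexHull_neg, and_comm]

end LieBracket

theorem stmt_11 (X Y : (Fin n → ℝ) → (Fin n → ℝ))
    (hX : LocallyLipschitz X) (hY : LocallyLipschitz Y) (x : Fin n → ℝ) :
    (setLieBracket X Y x).Nonempty ∧ IsCompact (setLieBracket X Y x) ∧
    Convex ℝ (setLieBracket X Y x) ∧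
    setLieBracket Y X x = -setLieBracket X Y x := by
  obtain ⟨C, hC⟩ := exists_eventually_norm_lieBracket_le hX hY x
  have : (𝓝[{z | DifferentiableAt ℝ X z ∧ DifferentiableAt ℝ Y z}] x).NeBot :=
    mem_closure_iff_nhdsWithin_neBot.1 <| Measure.dense_of_ae
      ((hX.ae_differentiableAt volume).and (hY.ae_differentiableAt volume)) x
  have hbounded : ∀ᶠ z in 𝓝[{z | DifferentiableAt ℝ X z ∧ DifferentiableAt ℝ Y z}] x,
      lieBracket X Y z ∈ Metric.closedBall 0 C :=
    nhdsWithin_le_nhds (hC.mono fun _ => mem_closedBall_zero_iff.2)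
  refine ⟨?_, ?_, convex_convexHull ℝ _, setLieBracket_swap X Y x⟩ <;>
    rw [setLieBracket_eq_convexHull_setOf_mapClusterPt]
  · obtain ⟨v, -, hv⟩ :=
      (isCompact_closedBall 0 C).exists_mapClusterPt_of_frequently hbounded.frequently
    exact ⟨v, subset_convexHull ℝ _ hv⟩
  · exact (isCompact_setOf_mapClusterPt (isCompact_closedBall 0 C) hbounded).convexHull
end
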